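/- Let Q = [0,1]×[0,1] ⊆ ℝ², α, β ∈ ℝ, let σ̃, φ̃ : ℝ×ℝ² → ℝ and u = (u₁,u₂) : ℝ×ℝ² → ℝ² be continuously differentiable, and let σ̂ : ℝ² → ℝ be continuously differentiable. Assume that for all t ∈ ℝ and (x,y) ∈ Q: (i) 2∂_t σ̃ + 2u·∇σ̃ + σ̃ div u + 2u·∇σ̂ + σ̂ div u = 0; (ii) 2∂_t u + 2(u·∇)u + σ̃∇σ̃ + σ̃∇σ̂ + σ̂∇σ̃ = −2αu + 2β∇φ̃; and for all t the no-normal-flow condition holds: u₁(t,0,y) = u₁(t,1,y) = 0 for y ∈ [0,1] and u₂(t,x,0) = u₂(t,x,1) = 0 for x ∈ [0,1]. Then the energy E(t) := ∫_Q (σ̃² + |u|²)(t,·) is differentiable in t and for every t satisfies E'(t) + 2α ∫_Q |u|² = ∫_Q σ̃ (u·∇σ̃) − 2∫_Q (u·∇σ̂) σ̃ + ∫_Q (div u) σ̃² + ∫_Q (div u) |u|² + 2β ∫_Q u·∇φ̃, where all spatial integrals are over Q at time t. -/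

import Mathlib

/-- Partial derivative in the time variable of a function of `(t, x, y)`. -/
noncomputable def pt (f : ℝ → ℝ → ℝ → ℝ) : ℝ → ℝ → ℝ → ℝ :=
  fun t x y => deriv (fun s => f s x y) t

/-- Partial derivative in the first space variable of a function of `(t, x, y)`. -/
noncomputable def px (f : ℝ → ℝ → ℝ → ℝ) : ℝ → ℝ → ℝ → ℝ :=
  fun t x y => deriv (fun s => f t s y) x

/-- Partial derivative in the second space variable of a function of `(t, x, y)`. -/
noncomputable def py (f : ℝ → ℝ → ℝ → ℝ) : ℝ → ℝ → ℝ → ℝ :=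
  fun t x y => deriv (fun s => f t x s) y

/-- Partial derivative in the first variable of a function of `(x, y)`. -/
noncomputable def qx (f : ℝ → ℝ → ℝ) : ℝ → ℝ → ℝ :=
  fun x y => deriv (fun s => f s y) x

/-- Partial derivative in the second variable of a function of `(x, y)`. -/
noncomputable def qy (f : ℝ → ℝ → ℝ) : ℝ → ℝ → ℝ :=
  fun x y => deriv (fun s => f x s) y

/-!
Testing (i) with `σ̃` and (ii) with `u` and adding gives, pointwise on `Q`,
`∂ₜ(σ̃² + |u|²) = K - div (Φ u)` with `Φ = 2σ̃² + σ̂σ̃ + |u|²`, where `K` is the integrand of the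
right-hand side. The divergence integrates to zero over `Q` because `Φ u₁` vanishes on the
vertical sides and `Φ u₂` on the horizontal ones, and since all integrands are continuous on a
compact set, the time derivative of the energy passes under the integral sign.
-/

open Set Function

section PartialDerivatives

theorem ContDiff.deriv_comp_eq_fderiv {E : Type*} [NormedAddCommGroup E] [NormedSpace ℝ E]
    {F : E → ℝ} (hF : ContDiff ℝ 1 F) {c : ℝ → E} {v : E} {s : ℝ} (hc : HasDerivAt c v s) :
    deriv (fun r => F (c r)) s = fderiv ℝ F (c s) v :=
  ((hF.differentiable one_ne_zero _).hasFDerivAt.comp_hasDerivAt s hc).deriv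

variable {f : ℝ → ℝ → ℝ → ℝ} {g : ℝ → ℝ → ℝ}

theorem hasDerivAt_pt (hf : Differentiable ℝ fun q : ℝ × ℝ × ℝ => f q.1 q.2.1 q.2.2)
    (t x y : ℝ) : HasDerivAt (fun s => f s x y) (pt f t x y) t :=
  (by fun_prop : DifferentiableAt ℝ (fun s => f s x y) t).hasDerivAt

theorem hasDerivAt_qx (hg : Differentiable ℝ fun p : ℝ × ℝ => g p.1 p.2) (x y : ℝ) :
    HasDerivAt (fun s => g s y) (qx g x y) x :=
  (by fun_prop : DifferentiableAt ℝ (fun s => g s y) x).hasDerivAt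

theorem hasDerivAt_qy (hg : Differentiable ℝ fun p : ℝ × ℝ => g p.1 p.2) (x y : ℝ) :
    HasDerivAt (fun s => g x s) (qy g x y) y :=
  (by fun_prop : DifferentiableAt ℝ (fun s => g x s) y).hasDerivAt

theorem continuous_pt (hf : ContDiff ℝ 1 fun q : ℝ × ℝ × ℝ => f q.1 q.2.1 q.2.2) :
    Continuous fun q : ℝ × ℝ × ℝ => pt f q.1 q.2.1 q.2.2 := by
  have h (q : ℝ × ℝ × ℝ) : pt f q.1 q.2.1 q.2.2 =
      fderiv ℝ (fun q : ℝ × ℝ × ℝ => f q.1 q.2.1 q.2.2) q (1, 0, 0) :=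
    hf.deriv_comp_eq_fderiv ((hasDerivAt_id _).prodMk
      ((hasDerivAt_const _ _).prodMk (hasDerivAt_const _ _)))
  simpa only [h] using (hf.continuous_fderiv one_ne_zero).clm_apply continuous_const

theorem continuous_qx (hg : ContDiff ℝ 1 fun p : ℝ × ℝ => g p.1 p.2) :
    Continuous fun p : ℝ × ℝ => qx g p.1 p.2 := by
  have h (p : ℝ × ℝ) : qx g p.1 p.2 = fderiv ℝ (fun p : ℝ × ℝ => g p.1 p.2) p (1, 0) :=
    hg.deriv_comp_eq_fderiv ((hasDerivAt_id _).prodMk (hasDerivAt_const _ _))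
  simpa only [h] using (hg.continuous_fderiv one_ne_zero).clm_apply continuous_const

theorem continuous_qy (hg : ContDiff ℝ 1 fun p : ℝ × ℝ => g p.1 p.2) :
    Continuous fun p : ℝ × ℝ => qy g p.1 p.2 := by
  have h (p : ℝ × ℝ) : qy g p.1 p.2 = fderiv ℝ (fun p : ℝ × ℝ => g p.1 p.2) p (0, 1) :=
    hg.deriv_comp_eq_fderiv ((hasDerivAt_const _ _).prodMk (hasDerivAt_id _))
  simpa only [h] using (hg.continuous_fderiv one_ne_zero).clm_apply continuous_const

end PartialDerivatives

section IteratedIntegrals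

variable {E : Type*} [NormedAddCommGroup E] [NormedSpace ℝ E]

theorem hasDerivAt_intervalIntegral_of_continuous {F F' : ℝ → ℝ → E}
    (hF : Continuous (uncurry F)) (hF' : Continuous (uncurry F'))
    (hd : ∀ s x, HasDerivAt (F · x) (F' s x) s) (a b t : ℝ) :
    HasDerivAt (fun s => ∫ x in a..b, F s x) (∫ x in a..b, F' t x) t := by
  obtain ⟨C, hC⟩ := ((isCompact_closedBall t 1).prod (isCompact_uIcc (a := a) (b := b))
    ).exists_bound_of_continuousOn hF'.continuousOn
  refine (intervalIntegral.hasDerivAt_integral_of_dominated_loc_of_deriv_le (bound := fun _ => C)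
    (Metric.closedBall_mem_nhds t one_pos)
    (.of_forall fun s => (hF.uncurry_left s).aestronglyMeasurable)
    ((hF.uncurry_left t).intervalIntegrable a b) (hF'.uncurry_left t).aestronglyMeasurable
    (.of_forall fun x hx s hs => hC (s, x) ⟨hs, uIoc_subset_uIcc hx⟩)
    intervalIntegrable_const (.of_forall fun x _ s _ => hd s x)).2

theorem hasDerivAt_integral_integral_of_continuous {F F' : ℝ → ℝ → ℝ → E}
    (hF : Continuous fun q : ℝ × ℝ × ℝ => F q.1 q.2.1 q.2.2)
    (hF' : Continuous fun q : ℝ × ℝ × ℝ => F' q.1 q.2.1 q.2.2)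
    (hd : ∀ s x y, HasDerivAt (F · x y) (F' s x y) s) (a b c d t : ℝ) :
    HasDerivAt (fun s => ∫ x in a..b, ∫ y in c..d, F s x y)
      (∫ x in a..b, ∫ y in c..d, F' t x y) t :=
  hasDerivAt_intervalIntegral_of_continuous (by fun_prop) (by fun_prop)
    (fun s x => hasDerivAt_intervalIntegral_of_continuous (by fun_prop) (by fun_prop)
      (fun s y => hd s x y) c d s) a b t

variable {a b c d : ℝ}

theorem integral_integral_add {f g : ℝ → ℝ → E} (hf : Continuous (uncurry f))
    (hg : Continuous (uncurry g)) :
    ∫ x in a..b, ∫ y in c..d, (f x y + g x y) =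
      (∫ x in a..b, ∫ y in c..d, f x y) + ∫ x in a..b, ∫ y in c..d, g x y := by
  have hF : Continuous fun x => ∫ y in c..d, f x y := by fun_prop
  have hG : Continuous fun x => ∫ y in c..d, g x y := by fun_prop
  rw [← intervalIntegral.integral_add (hF.intervalIntegrable a b) (hG.intervalIntegrable a b)]
  exact intervalIntegral.integral_congr fun x _ => intervalIntegral.integral_add
    ((hf.uncurry_left x).intervalIntegrable c d) ((hg.uncurry_left x).intervalIntegrable c d)

theorem integral_integral_sub {f g : ℝ → ℝ → E} (hf : Continuous (uncurry f))
    (hg : Continuous (uncurry g)) :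
    ∫ x in a..b, ∫ y in c..d, (f x y - g x y) =
      (∫ x in a..b, ∫ y in c..d, f x y) - ∫ x in a..b, ∫ y in c..d, g x y := by
  have hF : Continuous fun x => ∫ y in c..d, f x y := by fun_prop
  have hG : Continuous fun x => ∫ y in c..d, g x y := by fun_prop
  rw [← intervalIntegral.integral_sub (hF.intervalIntegrable a b) (hG.intervalIntegrable a b)]
  exact intervalIntegral.integral_congr fun x _ => intervalIntegral.integral_sub
    ((hf.uncurry_left x).intervalIntegrable c d) ((hg.uncurry_left x).intervalIntegrable c d)

theorem integral_integral_const_mul (r : ℝ) (f : ℝ → ℝ → ℝ) :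
    ∫ x in a..b, ∫ y in c..d, r * f x y = r * ∫ x in a..b, ∫ y in c..d, f x y := by
  simp only [intervalIntegral.integral_const_mul]

theorem integral_integral_qy_eq_zero {w : ℝ → ℝ → ℝ}
    (hw : ContDiff ℝ 1 fun p : ℝ × ℝ => w p.1 p.2) (hcd : ∀ x ∈ uIcc a b, w x c = w x d) :
    ∫ x in a..b, ∫ y in c..d, qy w x y = 0 := by
  have := continuous_qy hw
  have hx : ∀ x ∈ uIcc a b, ∫ y in c..d, qy w x y = 0 := fun x hx => by
    rw [intervalIntegral.integral_eq_sub_of_hasDerivAt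
      (fun y _ => hasDerivAt_qy (hw.differentiable one_ne_zero) x y)
      ((by fun_prop : Continuous fun y => qy w x y).intervalIntegrable c d), hcd x hx, sub_self]
  simp [intervalIntegral.integral_congr hx]

theorem integral_integral_qx_eq_zero {w : ℝ → ℝ → ℝ}
    (hw : ContDiff ℝ 1 fun p : ℝ × ℝ => w p.1 p.2) (hab : ∀ y ∈ uIcc c d, w a y = w b y) :
    ∫ x in a..b, ∫ y in c..d, qx w x y = 0 := by
  have hint : MeasureTheory.IntegrableOn (uncurry (qx w)) (uIoc a b ×ˢ uIoc c d) :=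
    ((continuous_qx hw).continuousOn.integrableOn_compact (isCompact_uIcc.prod isCompact_uIcc)
      ).mono_set (prod_mono uIoc_subset_uIcc uIoc_subset_uIcc)
  rw [MeasureTheory.intervalIntegral_intervalIntegral_swap hint]
  exact integral_integral_qy_eq_zero (w := fun y x => w x y) (by fun_prop) hab

end IteratedIntegrals

section EnergyBalance

theorem hasDerivAt_energy {σ u₁ u₂ : ℝ → ℝ → ℝ → ℝ}
    (hσ : ContDiff ℝ 1 fun q : ℝ × ℝ × ℝ => σ q.1 q.2.1 q.2.2)
    (hu₁ : ContDiff ℝ 1 fun q : ℝ × ℝ × ℝ => u₁ q.1 q.2.1 q.2.2)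
    (hu₂ : ContDiff ℝ 1 fun q : ℝ × ℝ × ℝ => u₂ q.1 q.2.1 q.2.2) (a b c d t : ℝ) :
    HasDerivAt (fun s => ∫ x in a..b, ∫ y in c..d, σ s x y ^ 2 + (u₁ s x y ^ 2 + u₂ s x y ^ 2))
      (∫ x in a..b, ∫ y in c..d, 2 * σ t x y * pt σ t x y +
        (2 * u₁ t x y * pt u₁ t x y + 2 * u₂ t x y * pt u₂ t x y)) t := by
  have := hσ.continuous; have := hu₁.continuous; have := hu₂.continuous
  have := continuous_pt hσ; have := continuous_pt hu₁; have := continuous_pt hu₂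
  refine hasDerivAt_integral_integral_of_continuous
    (F' := fun s x y => 2 * σ s x y * pt σ s x y +
      (2 * u₁ s x y * pt u₁ s x y + 2 * u₂ s x y * pt u₂ s x y)) ?_ ?_ (fun s x y => ?_) a b c d t
  · fun_prop
  · fun_prop
  have hσ' := hasDerivAt_pt (hσ.differentiable one_ne_zero) s x y
  have hu₁' := hasDerivAt_pt (hu₁.differentiable one_ne_zero) s x y
  have hu₂' := hasDerivAt_pt (hu₂.differentiable one_ne_zero) s x y
  exact ((hσ'.fun_pow 2).add ((hu₁'.fun_pow 2).add (hu₂'.fun_pow 2))).congr_deriv (by ring)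

/-- `energyFlux σ σh u₁ u₂ • u` is the flux in the local energy balance. -/
noncomputable def energyFlux (σ σh u₁ u₂ : ℝ → ℝ → ℝ) : ℝ → ℝ → ℝ :=
  fun x y => 2 * σ x y ^ 2 + σh x y * σ x y + (u₁ x y ^ 2 + u₂ x y ^ 2)

variable {α β : ℝ} {σ σ' φ u₁ u₁' u₂ u₂' σh : ℝ → ℝ → ℝ}

theorem energy_rate_eq_sub_div_energyFlux (hσ : Differentiable ℝ fun p : ℝ × ℝ => σ p.1 p.2)
    (hu₁ : Differentiable ℝ fun p : ℝ × ℝ => u₁ p.1 p.2)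
    (hu₂ : Differentiable ℝ fun p : ℝ × ℝ => u₂ p.1 p.2)
    (hσh : Differentiable ℝ fun p : ℝ × ℝ => σh p.1 p.2) {x y : ℝ}
    (hi : 2 * σ' x y + 2 * (u₁ x y * qx σ x y + u₂ x y * qy σ x y) +
        σ x y * (qx u₁ x y + qy u₂ x y) +
        2 * (u₁ x y * qx σh x y + u₂ x y * qy σh x y) +
        σh x y * (qx u₁ x y + qy u₂ x y) = 0)
    (hii₁ : 2 * u₁' x y + 2 * (u₁ x y * qx u₁ x y + u₂ x y * qy u₁ x y) +
        σ x y * qx σ x y + σ x y * qx σh x y + σh x y * qx σ x y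
        = -2 * α * u₁ x y + 2 * β * qx φ x y)
    (hii₂ : 2 * u₂' x y + 2 * (u₁ x y * qx u₂ x y + u₂ x y * qy u₂ x y) +
        σ x y * qy σ x y + σ x y * qy σh x y + σh x y * qy σ x y
        = -2 * α * u₂ x y + 2 * β * qy φ x y) :
    2 * σ x y * σ' x y + (2 * u₁ x y * u₁' x y + 2 * u₂ x y * u₂' x y) =
      -(2 * α) * (u₁ x y ^ 2 + u₂ x y ^ 2) +
        (σ x y * (u₁ x y * qx σ x y + u₂ x y * qy σ x y) -
          2 * ((u₁ x y * qx σh x y + u₂ x y * qy σh x y) * σ x y) +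
          (qx u₁ x y + qy u₂ x y) * σ x y ^ 2 +
          (qx u₁ x y + qy u₂ x y) * (u₁ x y ^ 2 + u₂ x y ^ 2) +
          2 * β * (u₁ x y * qx φ x y + u₂ x y * qy φ x y)) -
        qx (fun x y => energyFlux σ σh u₁ u₂ x y * u₁ x y) x y -
        qy (fun x y => energyFlux σ σh u₁ u₂ x y * u₂ x y) x y := by
  have hx : HasDerivAt (fun s => energyFlux σ σh u₁ u₂ s y * u₁ s y) _ x :=
    (((((hasDerivAt_qx hσ x y).fun_pow 2).const_mul 2).fun_add
      ((hasDerivAt_qx hσh x y).fun_mul (hasDerivAt_qx hσ x y))).fun_add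
      (((hasDerivAt_qx hu₁ x y).fun_pow 2).fun_add ((hasDerivAt_qx hu₂ x y).fun_pow 2))).fun_mul
      (hasDerivAt_qx hu₁ x y)
  have hy : HasDerivAt (fun s => energyFlux σ σh u₁ u₂ x s * u₂ x s) _ y :=
    (((((hasDerivAt_qy hσ x y).fun_pow 2).const_mul 2).fun_add
      ((hasDerivAt_qy hσh x y).fun_mul (hasDerivAt_qy hσ x y))).fun_add
      (((hasDerivAt_qy hu₁ x y).fun_pow 2).fun_add ((hasDerivAt_qy hu₂ x y).fun_pow 2))).fun_mul
      (hasDerivAt_qy hu₂ x y)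
  rw [show qx (fun x y => energyFlux σ σh u₁ u₂ x y * u₁ x y) x y = _ from hx.deriv,
    show qy (fun x y => energyFlux σ σh u₁ u₂ x y * u₂ x y) x y = _ from hy.deriv]
  linear_combination σ x y * hi + u₁ x y * hii₁ + u₂ x y * hii₂

theorem integral_energy_rate_eq {a b c d : ℝ} (hab : a ≤ b) (hcd : c ≤ d)
    (hσ : ContDiff ℝ 1 fun p : ℝ × ℝ => σ p.1 p.2) (hφ : ContDiff ℝ 1 fun p : ℝ × ℝ => φ p.1 p.2)
    (hu₁ : ContDiff ℝ 1 fun p : ℝ × ℝ => u₁ p.1 p.2)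
    (hu₂ : ContDiff ℝ 1 fun p : ℝ × ℝ => u₂ p.1 p.2)
    (hσh : ContDiff ℝ 1 fun p : ℝ × ℝ => σh p.1 p.2)
    (hi : ∀ x ∈ Icc a b, ∀ y ∈ Icc c d,
      2 * σ' x y + 2 * (u₁ x y * qx σ x y + u₂ x y * qy σ x y) +
        σ x y * (qx u₁ x y + qy u₂ x y) +
        2 * (u₁ x y * qx σh x y + u₂ x y * qy σh x y) +
        σh x y * (qx u₁ x y + qy u₂ x y) = 0)
    (hii₁ : ∀ x ∈ Icc a b, ∀ y ∈ Icc c d,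
      2 * u₁' x y + 2 * (u₁ x y * qx u₁ x y + u₂ x y * qy u₁ x y) +
        σ x y * qx σ x y + σ x y * qx σh x y + σh x y * qx σ x y
        = -2 * α * u₁ x y + 2 * β * qx φ x y)
    (hii₂ : ∀ x ∈ Icc a b, ∀ y ∈ Icc c d,
      2 * u₂' x y + 2 * (u₁ x y * qx u₂ x y + u₂ x y * qy u₂ x y) +
        σ x y * qy σ x y + σ x y * qy σh x y + σh x y * qy σ x y
        = -2 * α * u₂ x y + 2 * β * qy φ x y)
    (hbc₁ : ∀ y ∈ Icc c d, u₁ a y = 0 ∧ u₁ b y = 0)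
    (hbc₂ : ∀ x ∈ Icc a b, u₂ x c = 0 ∧ u₂ x d = 0) :
    ∫ x in a..b, ∫ y in c..d,
        2 * σ x y * σ' x y + (2 * u₁ x y * u₁' x y + 2 * u₂ x y * u₂' x y) =
      -(2 * α) * (∫ x in a..b, ∫ y in c..d, u₁ x y ^ 2 + u₂ x y ^ 2) +
        ((∫ x in a..b, ∫ y in c..d, σ x y * (u₁ x y * qx σ x y + u₂ x y * qy σ x y)) -
        2 * (∫ x in a..b, ∫ y in c..d, (u₁ x y * qx σh x y + u₂ x y * qy σh x y) * σ x y) +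
        (∫ x in a..b, ∫ y in c..d, (qx u₁ x y + qy u₂ x y) * σ x y ^ 2) +
        (∫ x in a..b, ∫ y in c..d, (qx u₁ x y + qy u₂ x y) * (u₁ x y ^ 2 + u₂ x y ^ 2)) +
        2 * β * ∫ x in a..b, ∫ y in c..d, u₁ x y * qx φ x y + u₂ x y * qy φ x y) := by
  have hΦu₁ : ContDiff ℝ 1 fun p : ℝ × ℝ => energyFlux σ σh u₁ u₂ p.1 p.2 * u₁ p.1 p.2 := by
    unfold energyFlux; fun_prop
  have hΦu₂ : ContDiff ℝ 1 fun p : ℝ × ℝ => energyFlux σ σh u₁ u₂ p.1 p.2 * u₂ p.1 p.2 := by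
    unfold energyFlux; fun_prop
  have hflux₁ : ∫ x in a..b, ∫ y in c..d,
      qx (fun x y => energyFlux σ σh u₁ u₂ x y * u₁ x y) x y = 0 :=
    integral_integral_qx_eq_zero hΦu₁ fun y hy => by
    rw [uIcc_of_le hcd] at hy
    simp only [hbc₁ y hy, mul_zero]
  have hflux₂ : ∫ x in a..b, ∫ y in c..d,
      qy (fun x y => energyFlux σ σh u₁ u₂ x y * u₂ x y) x y = 0 :=
    integral_integral_qy_eq_zero hΦu₂ fun x hx => by
    rw [uIcc_of_le hab] at hx
    simp only [hbc₂ x hx, mul_zero]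
  rw [intervalIntegral.integral_congr fun x hx => intervalIntegral.integral_congr fun y hy =>
    energy_rate_eq_sub_div_energyFlux (hσ.differentiable one_ne_zero)
      (hu₁.differentiable one_ne_zero) (hu₂.differentiable one_ne_zero)
      (hσh.differentiable one_ne_zero) (hi x (uIcc_of_le hab ▸ hx) y (uIcc_of_le hcd ▸ hy))
      (hii₁ x (uIcc_of_le hab ▸ hx) y (uIcc_of_le hcd ▸ hy))
      (hii₂ x (uIcc_of_le hab ▸ hx) y (uIcc_of_le hcd ▸ hy))]
  have := hσ.continuous; have := hu₁.continuous; have := hu₂.continuous; have := hσh.continuous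
  have := continuous_qx hσ; have := continuous_qy hσ; have := continuous_qx hσh
  have := continuous_qy hσh; have := continuous_qx hu₁; have := continuous_qy hu₂
  have := continuous_qx hφ; have := continuous_qy hφ
  have := continuous_qx (g := fun x y => energyFlux σ σh u₁ u₂ x y * u₁ x y) hΦu₁
  have := continuous_qy (g := fun x y => energyFlux σ σh u₁ u₂ x y * u₂ x y) hΦu₂
  -- split both sides into integrals of products, which then match up to `ring`
  repeat first
    | rw [integral_integral_add] | rw [integral_integral_sub] | rw [integral_integral_const_mul]
  · rw [hflux₁, hflux₂]
    ring
  all_goals fun_prop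

end EnergyBalance

/-- The zeroth-order energy balance for the sound-speed-transformed perturbation
equations of the vasculogenesis model with quadratic pressure on the unit square with
no-normal-flow boundary conditions: testing the continuity equation with `σ̃` and the
momentum equation with `u` and integrating by parts. -/
theorem zeroth_order_energy_balance
    (α β : ℝ)
    (σt φt u₁ u₂ : ℝ → ℝ → ℝ → ℝ) (σh : ℝ → ℝ → ℝ)
    (hσt : ContDiff ℝ 1 (fun q : ℝ × ℝ × ℝ => σt q.1 q.2.1 q.2.2))
    (hφt : ContDiff ℝ 1 (fun q : ℝ × ℝ × ℝ => φt q.1 q.2.1 q.2.2))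
    (hu₁ : ContDiff ℝ 1 (fun q : ℝ × ℝ × ℝ => u₁ q.1 q.2.1 q.2.2))
    (hu₂ : ContDiff ℝ 1 (fun q : ℝ × ℝ × ℝ => u₂ q.1 q.2.1 q.2.2))
    (hσh : ContDiff ℝ 1 (fun p : ℝ × ℝ => σh p.1 p.2))
    -- (i) transformed continuity equation on ℝ × Q
    (hi : ∀ (t : ℝ), ∀ x ∈ Set.Icc (0:ℝ) 1, ∀ y ∈ Set.Icc (0:ℝ) 1,
      2 * pt σt t x y + 2 * (u₁ t x y * px σt t x y + u₂ t x y * py σt t x y) +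
        σt t x y * (px u₁ t x y + py u₂ t x y) +
        2 * (u₁ t x y * qx σh x y + u₂ t x y * qy σh x y) +
        σh x y * (px u₁ t x y + py u₂ t x y) = 0)
    -- (ii) transformed momentum equation on ℝ × Q
    (hii₁ : ∀ (t : ℝ), ∀ x ∈ Set.Icc (0:ℝ) 1, ∀ y ∈ Set.Icc (0:ℝ) 1,
      2 * pt u₁ t x y + 2 * (u₁ t x y * px u₁ t x y + u₂ t x y * py u₁ t x y) +
        σt t x y * px σt t x y + σt t x y * qx σh x y + σh x y * px σt t x y
        = -2 * α * u₁ t x y + 2 * β * px φt t x y)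
    (hii₂ : ∀ (t : ℝ), ∀ x ∈ Set.Icc (0:ℝ) 1, ∀ y ∈ Set.Icc (0:ℝ) 1,
      2 * pt u₂ t x y + 2 * (u₁ t x y * px u₂ t x y + u₂ t x y * py u₂ t x y) +
        σt t x y * py σt t x y + σt t x y * qy σh x y + σh x y * py σt t x y
        = -2 * α * u₂ t x y + 2 * β * py φt t x y)
    -- no-normal-flow boundary condition
    (hbc₁ : ∀ t : ℝ, ∀ y ∈ Set.Icc (0:ℝ) 1, u₁ t 0 y = 0 ∧ u₁ t 1 y = 0)
    (hbc₂ : ∀ t : ℝ, ∀ x ∈ Set.Icc (0:ℝ) 1, u₂ t x 0 = 0 ∧ u₂ t x 1 = 0) :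
    ∀ t : ℝ, HasDerivAt
      (fun s => ∫ x in (0:ℝ)..1, ∫ y in (0:ℝ)..1,
        (σt s x y) ^ 2 + ((u₁ s x y) ^ 2 + (u₂ s x y) ^ 2))
      (-(2 * α) * (∫ x in (0:ℝ)..1, ∫ y in (0:ℝ)..1,
          (u₁ t x y) ^ 2 + (u₂ t x y) ^ 2) +
        ((∫ x in (0:ℝ)..1, ∫ y in (0:ℝ)..1,
          σt t x y * (u₁ t x y * px σt t x y + u₂ t x y * py σt t x y)) -
        2 * (∫ x in (0:ℝ)..1, ∫ y in (0:ℝ)..1,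
          (u₁ t x y * qx σh x y + u₂ t x y * qy σh x y) * σt t x y) +
        (∫ x in (0:ℝ)..1, ∫ y in (0:ℝ)..1,
          (px u₁ t x y + py u₂ t x y) * (σt t x y) ^ 2) +
        (∫ x in (0:ℝ)..1, ∫ y in (0:ℝ)..1,
          (px u₁ t x y + py u₂ t x y) * ((u₁ t x y) ^ 2 + (u₂ t x y) ^ 2)) +
        2 * β * ∫ x in (0:ℝ)..1, ∫ y in (0:ℝ)..1,
          u₁ t x y * px φt t x y + u₂ t x y * py φt t x y)) t := by
  intro t
  have slice (f : ℝ → ℝ → ℝ → ℝ) (hf : ContDiff ℝ 1 fun q : ℝ × ℝ × ℝ => f q.1 q.2.1 q.2.2) :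
      ContDiff ℝ 1 fun p : ℝ × ℝ => f t p.1 p.2 :=
    hf.comp (contDiff_const.prodMk contDiff_id)
  -- `px f t` and `py f t` are definitionally `qx (f t)` and `qy (f t)`
  exact (hasDerivAt_energy hσt hu₁ hu₂ 0 1 0 1 t).congr_deriv
    (integral_energy_rate_eq zero_le_one zero_le_one (slice σt hσt) (slice φt hφt) (slice u₁ hu₁)
      (slice u₂ hu₂) hσh (hi t) (hii₁ t) (hii₂ t) (hbc₁ t) (hbc₂ t))
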